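/- arXiv:2501.00594 — 2 statements merged into one kernel-verified Lean document; each statement's English description precedes it below -/
import Mathlib

section
/- Let q ∈ {1,2,...}, a > 1, b = q/2, c > 0, and f(x) = Φ(-x)^{-q} x^{a-1} e^{-bx² - cx} on (0,∞). Then f has a unique mode x_*, and (a-1)/c < x_* < (a-1+q)/c. -/
open MeasureTheory Real Set

/-- The standard normal cumulative distribution function. -/
noncomputable def stdNormalCDF (x : ℝ) : ℝ :=
  ∫ u in Set.Iio x, (Real.sqrt (2 * Real.pi))⁻¹ * Real.exp (-u ^ 2 / 2)

open Filter Topology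

/-!
Write `φ` for the standard normal density, `Φ̄ x = Φ(-x)` for its upper tail and `h = φ / Φ̄` for
the hazard rate. With `b = q/2` the derivative of `log f` is `q (h x - x) + (a - 1)/x - c`.
Gordon's inequality `x < h x < x + 1/x` makes it positive at `(a - 1)/c` and negative at
`(a - 1 + q)/c`, and the log-concavity of `Φ̄`, in the form `h (h - x) < 1`, makes `h x - x`, hence
the whole derivative, strictly decreasing. So `log f` increases strictly up to a single critical
point and decreases strictly after it.

Each of the Gaussian inequalities is proved as `G x < 0` (or `0 < G x`) for a function `G` that is
strictly monotone on `[x, ∞)` and tends to `0` at infinity.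
-/

theorem lt_of_tendsto_of_hasDerivAt_pos {G G' : ℝ → ℝ} {x l : ℝ}
    (hG : ∀ t ∈ Ici x, HasDerivAt G (G' t) t) (hG' : ∀ t ∈ Ioi x, 0 < G' t)
    (hlim : Tendsto G atTop (𝓝 l)) : G x < l := by
  have hmono : StrictMonoOn G (Ici x) :=
    strictMonoOn_of_hasDerivWithinAt_pos (convex_Ici x)
      (fun t ht => (hG t ht).continuousAt.continuousWithinAt)
      (fun t ht => (hG t (interior_subset ht)).hasDerivWithinAt)
      (fun t ht => hG' t (by rwa [interior_Ici] at ht))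
  have hle : G (x + 1) ≤ l := ge_of_tendsto hlim <| by
    filter_upwards [eventually_ge_atTop (x + 1)] with t ht
    exact hmono.monotoneOn (mem_Ici.2 (by linarith)) (mem_Ici.2 (by linarith)) ht
  exact (hmono self_mem_Ici (mem_Ici.2 (by linarith)) (by linarith)).trans_le hle

theorem lt_of_tendsto_of_hasDerivAt_neg {G G' : ℝ → ℝ} {x l : ℝ}
    (hG : ∀ t ∈ Ici x, HasDerivAt G (G' t) t) (hG' : ∀ t ∈ Ioi x, G' t < 0)
    (hlim : Tendsto G atTop (𝓝 l)) : l < G x :=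
  neg_lt_neg_iff.1 <| lt_of_tendsto_of_hasDerivAt_pos (G := fun t => -G t)
    (fun t ht => (hG t ht).neg) (fun t ht => neg_pos.2 (hG' t ht)) hlim.neg

noncomputable def stdNormalPDF (x : ℝ) : ℝ := (√(2 * π))⁻¹ * exp (-x ^ 2 / 2)

noncomputable def stdNormalTail (x : ℝ) : ℝ := ∫ u in Ioi x, stdNormalPDF u

theorem stdNormalPDF_pos (x : ℝ) : 0 < stdNormalPDF x := by
  unfold stdNormalPDF; positivity

theorem continuous_stdNormalPDF : Continuous stdNormalPDF := by
  unfold stdNormalPDF; fun_prop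

theorem integrable_stdNormalPDF : Integrable stdNormalPDF := by
  refine ((integrable_exp_neg_mul_sq (b := 1 / 2) (by norm_num)).const_mul (√(2 * π))⁻¹).congr
    (.of_forall fun t => ?_)
  simp only [stdNormalPDF]
  ring_nf

theorem hasDerivAt_stdNormalPDF (x : ℝ) :
    HasDerivAt stdNormalPDF (-x * stdNormalPDF x) x := by
  have h : HasDerivAt (fun y : ℝ => -y ^ 2 / 2) (-x) x :=
    ((hasDerivAt_pow 2 x).neg.div_const 2).congr_deriv (by ring)
  exact (h.exp.const_mul _).congr_deriv (by simp only [stdNormalPDF]; ring)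

theorem tendsto_stdNormalPDF_atTop : Tendsto stdNormalPDF atTop (𝓝 0) := by
  have h : Tendsto (fun x : ℝ => -x ^ 2 / 2) atTop atBot :=
    (tendsto_neg_atTop_atBot.comp (tendsto_pow_atTop two_ne_zero)).atBot_div_const two_pos
  have h' := (tendsto_exp_atBot.comp h).const_mul (√(2 * π))⁻¹
  rw [mul_zero] at h'
  exact h'

theorem stdNormalCDF_neg (x : ℝ) : stdNormalCDF (-x) = stdNormalTail x := by
  rw [stdNormalCDF, ← integral_Iic_eq_integral_Iio, stdNormalTail, ← integral_comp_neg_Ioi]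
  simp [stdNormalPDF]

theorem stdNormalTail_eq_sub_intervalIntegral (x : ℝ) :
    stdNormalTail x = stdNormalTail 0 - ∫ u in (0)..x, stdNormalPDF u := by
  rw [← intervalIntegral.integral_Ioi_sub_Ioi' integrable_stdNormalPDF.integrableOn
    integrable_stdNormalPDF.integrableOn, stdNormalTail, stdNormalTail, sub_sub_cancel]

theorem hasDerivAt_stdNormalTail (x : ℝ) :
    HasDerivAt stdNormalTail (-stdNormalPDF x) x := by
  rw [funext stdNormalTail_eq_sub_intervalIntegral]
  exact (intervalIntegral.integral_hasDerivAt_right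
    (continuous_stdNormalPDF.intervalIntegrable _ _)
    continuous_stdNormalPDF.aestronglyMeasurable.stronglyMeasurableAtFilter
    continuous_stdNormalPDF.continuousAt).const_sub _

theorem tendsto_stdNormalTail_atTop : Tendsto stdNormalTail atTop (𝓝 0) := by
  have h := (intervalIntegral_tendsto_integral_Ioi 0 integrable_stdNormalPDF.integrableOn
    tendsto_id).const_sub (stdNormalTail 0)
  rw [← stdNormalTail, sub_self] at h
  exact h.congr fun x => (stdNormalTail_eq_sub_intervalIntegral x).symm

theorem stdNormalTail_pos (x : ℝ) : 0 < stdNormalTail x :=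
  lt_of_tendsto_of_hasDerivAt_neg (fun t _ => hasDerivAt_stdNormalTail t)
    (fun t _ => neg_neg_of_pos (stdNormalPDF_pos t)) tendsto_stdNormalTail_atTop

theorem mul_stdNormalTail_lt_stdNormalPDF (x : ℝ) : x * stdNormalTail x < stdNormalPDF x := by
  have h := lt_of_tendsto_of_hasDerivAt_pos (x := x)
    (G := fun t => x * stdNormalTail t - stdNormalPDF t) (G' := fun t => (t - x) * stdNormalPDF t)
    (fun t _ => (((hasDerivAt_stdNormalTail t).const_mul x).sub
      (hasDerivAt_stdNormalPDF t)).congr_deriv (by ring))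
    (fun t ht => mul_pos (sub_pos.2 ht) (stdNormalPDF_pos t))
    (by simpa using (tendsto_stdNormalTail_atTop.const_mul x).sub tendsto_stdNormalPDF_atTop)
  linarith

theorem mul_stdNormalPDF_lt_one_add_sq_mul_stdNormalTail (x : ℝ) :
    x * stdNormalPDF x < (1 + x ^ 2) * stdNormalTail x := by
  rcases le_or_gt x 0 with hx | hx
  · nlinarith [stdNormalPDF_pos x, stdNormalTail_pos x]
  have hlim : Tendsto (fun t => x ^ 2 * (stdNormalPDF t / t) - (1 + x ^ 2) * stdNormalTail t)
      atTop (𝓝 0) := by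
    simpa using ((tendsto_stdNormalPDF_atTop.div_atTop tendsto_id).const_mul (x ^ 2)).sub
      (tendsto_stdNormalTail_atTop.const_mul (1 + x ^ 2))
  have h := lt_of_tendsto_of_hasDerivAt_pos (x := x)
    (G := fun t => x ^ 2 * (stdNormalPDF t / t) - (1 + x ^ 2) * stdNormalTail t)
    (G' := fun t => (1 - x ^ 2 / t ^ 2) * stdNormalPDF t)
    (fun t ht => by
      have ht0 : t ≠ 0 := (hx.trans_le ht).ne'
      exact ((((hasDerivAt_stdNormalPDF t).div (hasDerivAt_id' t) ht0).const_mul (x ^ 2)).sub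
        ((hasDerivAt_stdNormalTail t).const_mul (1 + x ^ 2))).congr_deriv
        (by field_simp; ring))
    (fun t ht => by
      have hxt : x ^ 2 < t ^ 2 := pow_lt_pow_left₀ ht hx.le two_ne_zero
      have : 0 < 1 - x ^ 2 / t ^ 2 := by
        rw [sub_pos, div_lt_one (pow_pos (hx.trans ht) 2)]; exact hxt
      exact mul_pos this (stdNormalPDF_pos t))
    hlim
  have hx2 : x ^ 2 * (stdNormalPDF x / x) = x * stdNormalPDF x := by field_simp
  simp only [hx2] at h
  linarith

theorem tendsto_mul_stdNormalTail_atTop : Tendsto (fun x => x * stdNormalTail x) atTop (𝓝 0) := by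
  refine squeeze_zero' ?_ ?_ tendsto_stdNormalPDF_atTop
  · filter_upwards [eventually_ge_atTop 0] with x hx
    exact mul_nonneg hx (stdNormalTail_pos x).le
  · exact .of_forall fun x => (mul_stdNormalTail_lt_stdNormalPDF x).le

theorem stdNormalPDF_sq_lt (x : ℝ) :
    stdNormalPDF x ^ 2 < stdNormalTail x ^ 2 + x * stdNormalTail x * stdNormalPDF x := by
  have hlim : Tendsto
      (fun t => stdNormalTail t ^ 2 + t * stdNormalTail t * stdNormalPDF t - stdNormalPDF t ^ 2)
      atTop (𝓝 0) := by
    simpa using ((tendsto_stdNormalTail_atTop.pow 2).add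
      (tendsto_mul_stdNormalTail_atTop.mul tendsto_stdNormalPDF_atTop)).sub
      (tendsto_stdNormalPDF_atTop.pow 2)
  have h := lt_of_tendsto_of_hasDerivAt_neg (x := x)
    (G := fun t => stdNormalTail t ^ 2 + t * stdNormalTail t * stdNormalPDF t - stdNormalPDF t ^ 2)
    (G' := fun t => stdNormalPDF t * (t * stdNormalPDF t - (1 + t ^ 2) * stdNormalTail t))
    (fun t _ => ((((hasDerivAt_stdNormalTail t).pow 2).add (((hasDerivAt_id' t).mul
      (hasDerivAt_stdNormalTail t)).mul (hasDerivAt_stdNormalPDF t))).sub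
      ((hasDerivAt_stdNormalPDF t).pow 2)).congr_deriv (by simp only [Pi.mul_apply]; ring))
    (fun t _ => mul_neg_of_pos_of_neg (stdNormalPDF_pos t)
      (sub_neg.2 (mul_stdNormalPDF_lt_one_add_sq_mul_stdNormalTail t)))
    hlim
  linarith

noncomputable def stdNormalHazard (x : ℝ) : ℝ := stdNormalPDF x / stdNormalTail x

theorem hasDerivAt_stdNormalHazard (x : ℝ) :
    HasDerivAt stdNormalHazard (stdNormalHazard x * (stdNormalHazard x - x)) x := by
  have hΦ := (stdNormalTail_pos x).ne'
  exact ((hasDerivAt_stdNormalPDF x).div (hasDerivAt_stdNormalTail x) hΦ).congr_deriv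
    (by simp only [stdNormalHazard]; field_simp; ring)

theorem stdNormalHazard_mul_sub_lt_one (x : ℝ) :
    stdNormalHazard x * (stdNormalHazard x - x) < 1 := by
  have hΦ := stdNormalTail_pos x
  have h : stdNormalHazard x * (stdNormalHazard x - x) =
      (stdNormalPDF x ^ 2 - x * stdNormalTail x * stdNormalPDF x) / stdNormalTail x ^ 2 := by
    simp only [stdNormalHazard]; field_simp
  rw [h, div_lt_one (by positivity)]
  linarith [stdNormalPDF_sq_lt x]

theorem strictAnti_stdNormalHazard_sub_id : StrictAnti fun x => stdNormalHazard x - x :=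
  strictAnti_of_hasDerivAt_neg (fun x => (hasDerivAt_stdNormalHazard x).sub (hasDerivAt_id x))
    (fun x => by linarith [stdNormalHazard_mul_sub_lt_one x])

theorem stdNormalHazard_sub_pos (x : ℝ) : 0 < stdNormalHazard x - x :=
  sub_pos.2 <| (lt_div_iff₀ (stdNormalTail_pos x)).2 (mul_stdNormalTail_lt_stdNormalPDF x)

theorem stdNormalHazard_sub_lt_inv {x : ℝ} (hx : 0 < x) : stdNormalHazard x - x < x⁻¹ := by
  rw [sub_lt_iff_lt_add, stdNormalHazard, div_lt_iff₀ (stdNormalTail_pos x)]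
  have h := mul_stdNormalPDF_lt_one_add_sq_mul_stdNormalTail x
  have : (x⁻¹ + x) * stdNormalTail x = (1 + x ^ 2) * stdNormalTail x / x := by field_simp
  rw [this, lt_div_iff₀ hx]
  linarith

theorem exists_strictMonoOn_strictAntiOn_of_hasDerivAt {s : Set ℝ} {g g' : ℝ → ℝ} {x₁ x₂ : ℝ}
    (hs : Convex ℝ s) (hg : ∀ x ∈ s, HasDerivAt g (g' x) x) (hg' : StrictAntiOn g' s)
    (hx₁ : x₁ ∈ s) (hx₂ : x₂ ∈ s) (h₁₂ : x₁ ≤ x₂) (h₁ : 0 < g' x₁) (h₂ : g' x₂ < 0) :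
    ∃ m ∈ Ioo x₁ x₂, StrictMonoOn g (s ∩ Iic m) ∧ StrictAntiOn g (s ∩ Ici m) := by
  have hIcc : Icc x₁ x₂ ⊆ s := hs.ordConnected.out hx₁ hx₂
  obtain ⟨m, hm, hm₀⟩ := exists_hasDerivWithinAt_eq_of_lt_of_gt h₁₂
    (fun x hx => (hg x (hIcc hx)).hasDerivWithinAt) h₁ h₂
  have hms : m ∈ s := hIcc (Ioo_subset_Icc_self hm)
  have hcont : ∀ t ⊆ s, ContinuousOn g t := fun t ht x hx =>
    (hg x (ht hx)).continuousAt.continuousWithinAt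
  have hderiv : ∀ t ⊆ s, ∀ x ∈ interior t, HasDerivWithinAt g (g' x) (interior t) x :=
    fun t ht x hx => (hg x (ht (interior_subset hx))).hasDerivWithinAt
  refine ⟨m, hm, ?_, ?_⟩
  · refine strictMonoOn_of_hasDerivWithinAt_pos (hs.inter (convex_Iic m)) (hcont _
      inter_subset_left) (hderiv _ inter_subset_left) fun x hx => ?_
    rw [interior_inter, interior_Iic] at hx
    exact hm₀ ▸ hg' (interior_subset hx.1) hms hx.2
  · refine strictAntiOn_of_hasDerivWithinAt_neg (hs.inter (convex_Ici m)) (hcont _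
      inter_subset_left) (hderiv _ inter_subset_left) fun x hx => ?_
    rw [interior_inter, interior_Ici] at hx
    exact hm₀ ▸ hg' hms (interior_subset hx.1) hx.2

theorem isMaxOn_iff_eq_of_strictMonoOn_of_strictAntiOn {α β : Type*} [LinearOrder α]
    [LinearOrder β] {f : α → β} {s : Set α} {m y : α} (hm : m ∈ s)
    (hinc : StrictMonoOn f (s ∩ Iic m)) (hdec : StrictAntiOn f (s ∩ Ici m)) (hy : y ∈ s) :
    IsMaxOn f s y ↔ y = m := by
  constructor
  · intro hmax
    by_contra hne
    have hlt : f y < f m := by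
      rcases lt_or_gt_of_ne hne with h | h
      · exact hinc ⟨hy, h.le⟩ ⟨hm, le_rfl⟩ h
      · exact hdec ⟨hm, le_rfl⟩ ⟨hy, h.le⟩ h
    exact (hmax hm).not_gt hlt
  · rintro rfl z hz
    rcases le_total z y with h | h
    · exact hinc.monotoneOn ⟨hz, h⟩ ⟨hy, le_rfl⟩ h
    · exact hdec.antitoneOn ⟨hy, le_rfl⟩ ⟨hz, h⟩ h

noncomputable def logDensity (q a b c x : ℝ) : ℝ :=
  -q * log (stdNormalTail x) + (a - 1) * log x - b * x ^ 2 - c * x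

theorem exp_logDensity (q a b c : ℝ) {x : ℝ} (hx : 0 < x) :
    exp (logDensity q a b c x) =
      stdNormalCDF (-x) ^ (-q) * x ^ (a - 1) * exp (-b * x ^ 2 - c * x) := by
  rw [stdNormalCDF_neg, rpow_def_of_pos (stdNormalTail_pos x), rpow_def_of_pos hx,
    ← exp_add, ← exp_add, logDensity]
  ring_nf

noncomputable def logDensityDeriv (q a c x : ℝ) : ℝ :=
  q * (stdNormalHazard x - x) + (a - 1) / x - c

theorem hasDerivAt_logDensity (q a c : ℝ) {x : ℝ} (hx : 0 < x) :
    HasDerivAt (logDensity q a (q / 2) c) (logDensityDeriv q a c x) x := by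
  have hlogTail := (hasDerivAt_stdNormalTail x).log (stdNormalTail_pos x).ne'
  exact ((((hlogTail.const_mul (-q)).add ((hasDerivAt_log hx.ne').const_mul (a - 1))).sub
    ((hasDerivAt_pow 2 x).const_mul (q / 2))).sub ((hasDerivAt_id' x).const_mul c)).congr_deriv
    (by simp only [logDensityDeriv, stdNormalHazard]; field_simp; ring)

theorem strictAntiOn_logDensityDeriv {q a : ℝ} (hq : 0 ≤ q) (ha : 1 < a) (c : ℝ) :
    StrictAntiOn (logDensityDeriv q a c) (Ioi 0) := fun x hx y _ hxy => by
  have h₁ := mul_le_mul_of_nonneg_left (strictAnti_stdNormalHazard_sub_id hxy).le hq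
  have h₂ := div_lt_div_of_pos_left (sub_pos.2 ha) hx hxy
  simp only [logDensityDeriv]
  linarith

theorem logDensityDeriv_pos {q a c x : ℝ} (hq : 0 < q) (hx : 0 < x) (h : c * x ≤ a - 1) :
    0 < logDensityDeriv q a c x := by
  have h₁ := mul_pos hq (stdNormalHazard_sub_pos x)
  have h₂ : c ≤ (a - 1) / x := by rw [le_div_iff₀ hx]; linarith
  simp only [logDensityDeriv]
  linarith

theorem logDensityDeriv_neg {q a c x : ℝ} (hq : 0 < q) (hx : 0 < x) (h : a - 1 + q ≤ c * x) :
    logDensityDeriv q a c x < 0 := by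
  have h₁ := mul_lt_mul_of_pos_left (stdNormalHazard_sub_lt_inv hx) hq
  have h₂ : q * x⁻¹ + (a - 1) / x ≤ c := by
    rw [← div_eq_mul_inv, ← add_div, div_le_iff₀ hx]; linarith
  simp only [logDensityDeriv]
  linarith

/-- For `q ≥ 1`, `a > 1`, `b = q/2`, `c > 0`, the function
`f(x) = Φ(-x)^{-q} x^{a-1} e^{-bx² - cx}` has a unique mode `x⋆` on `(0,∞)`,
satisfying `(a-1)/c < x⋆ < (a-1+q)/c`. -/
theorem mode_bound_b_eq_half_q (q : ℕ) (hq : 1 ≤ q) (a b c : ℝ)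
    (ha : 1 < a) (hb : b = (q : ℝ) / 2) (hc : 0 < c)
    (f : ℝ → ℝ)
    (hf : ∀ x : ℝ, f x = (stdNormalCDF (-x)) ^ (-(q : ℝ)) * x ^ (a - 1) *
        Real.exp (-b * x ^ 2 - c * x)) :
    ∃ xs : ℝ, (xs ∈ Set.Ioi (0 : ℝ) ∧ IsMaxOn f (Set.Ioi 0) xs ∧
        (a - 1) / c < xs ∧ xs < (a - 1 + q) / c) ∧
      ∀ y ∈ Set.Ioi (0 : ℝ), IsMaxOn f (Set.Ioi 0) y → y = xs := by
  subst hb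
  have hq₀ : (0 : ℝ) < q := by exact_mod_cast hq
  have hx₁ : 0 < (a - 1) / c := div_pos (sub_pos.2 ha) hc
  have hx₂ : 0 < (a - 1 + q) / c := div_pos (by linarith) hc
  obtain ⟨m, hm, hinc, hdec⟩ := exists_strictMonoOn_strictAntiOn_of_hasDerivAt (convex_Ioi 0)
    (fun x hx => hasDerivAt_logDensity q a c hx) (strictAntiOn_logDensityDeriv hq₀.le ha c)
    hx₁ hx₂ (by gcongr; linarith)
    (logDensityDeriv_pos hq₀ hx₁ (mul_div_cancel₀ _ hc.ne').le)
    (logDensityDeriv_neg hq₀ hx₂ (mul_div_cancel₀ _ hc.ne').ge)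
  have hm₀ : m ∈ Ioi 0 := hx₁.trans hm.1
  have hfexp : EqOn (exp ∘ logDensity q a (q / 2) c) f (Ioi 0) := fun x hx => by
    rw [hf, Function.comp_apply, exp_logDensity _ _ _ _ hx]
  have hmax := fun y (hy : y ∈ Ioi (0 : ℝ)) => isMaxOn_iff_eq_of_strictMonoOn_of_strictAntiOn hm₀
    ((exp_strictMono.comp_strictMonoOn hinc).congr (hfexp.mono inter_subset_left))
    ((exp_strictMono.comp_strictAntiOn hdec).congr (hfexp.mono inter_subset_left)) hy
  exact ⟨m, ⟨hm₀, (hmax m hm₀).2 rfl, hm⟩, fun y hy => (hmax y hy).1⟩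
end

section
/- For λ₁, σ², λ₂ > 0, a one-dimensional random variable β with density proportional to exp{−λ₂β²/(2σ²) − λ₁|β|/(2σ²)} is an equal-weight two-component mixture of a negatively truncated normal N⁻(λ₁/(2λ₂), σ²/λ₂) on (−∞,0) and a nonnegatively truncated normal N⁺(−λ₁/(2λ₂), σ²/λ₂) on [0,∞). -/
open MeasureTheory Real Set

/-- The normal density with mean `m` and variance `v`. -/
noncomputable def normalPDF (m v x : ℝ) : ℝ :=
  (Real.sqrt (2 * Real.pi * v))⁻¹ * Real.exp (-(x - m) ^ 2 / (2 * v))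

lemma phi_integrable :
    Integrable (fun u : ℝ => (Real.sqrt (2 * Real.pi))⁻¹ * Real.exp (-u ^ 2 / 2)) := by
  have h := (integrable_exp_neg_mul_sq (by norm_num : (0:ℝ) < 1/2)).const_mul
    (Real.sqrt (2 * Real.pi))⁻¹
  have e : ∀ u : ℝ, -u ^ 2 / 2 = -(1/2) * u ^ 2 := fun u => by ring
  simpa [e] using h

lemma phi_total :
    (∫ u : ℝ, (Real.sqrt (2 * Real.pi))⁻¹ * Real.exp (-u ^ 2 / 2)) = 1 := by
  have e : ∀ u : ℝ, -u ^ 2 / 2 = -(1/2) * u ^ 2 := fun u => by ring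
  simp_rw [e]
  rw [integral_const_mul, integral_gaussian]
  have h2 : Real.pi / (1/2) = 2 * Real.pi := by ring
  rw [h2, inv_mul_cancel₀]
  positivity

lemma cdf_compl (x : ℝ) : stdNormalCDF (-x) = 1 - stdNormalCDF x := by
  have hInt := phi_integrable
  have hsum := intervalIntegral.integral_Iio_add_Ici (μ := volume) (b := x) hInt.integrableOn hInt.integrableOn
  rw [phi_total] at hsum
  have heven : (∫ u in Set.Iio (-x), (Real.sqrt (2 * Real.pi))⁻¹ * Real.exp (-u ^ 2 / 2)) =
      ∫ u in Set.Ici x, (Real.sqrt (2 * Real.pi))⁻¹ * Real.exp (-u ^ 2 / 2) := by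
    have key := integral_comp_neg_Iic (-x)
      (fun u : ℝ => (Real.sqrt (2 * Real.pi))⁻¹ * Real.exp (-u ^ 2 / 2))
    simp only [neg_neg] at key
    rw [← integral_Iic_eq_integral_Iio, integral_Ici_eq_integral_Ioi, ← key]
    simp
  unfold stdNormalCDF
  rw [heven]
  linarith

lemma cdf_pos (x : ℝ) : 0 < stdNormalCDF x := by
  unfold stdNormalCDF
  rw [setIntegral_pos_iff_support_of_nonneg_ae]
  · have : Function.support (fun u : ℝ => (Real.sqrt (2 * Real.pi))⁻¹ * Real.exp (-u ^ 2 / 2))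
        = Set.univ := by
      ext u
      simp [Function.mem_support]
      positivity
    rw [this, Set.univ_inter]
    simp [Real.volume_Iio]
  · filter_upwards with u
    positivity
  · exact phi_integrable.integrableOn

/-- The one-dimensional commonly-scaled elastic net prior, with density proportional to
`exp{-λ₂β²/(2σ²) - λ₁|β|/(2σ²)}`, is an equal-weight mixture of the negatively truncated
normal `N⁻(λ₁/(2λ₂), σ²/λ₂)` and the nonnegatively truncated normal `N⁺(-λ₁/(2λ₂), σ²/λ₂)`. -/
theorem elastic_net_prior_truncated_normal_mixture (lam1 lam2 sig2 : ℝ)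
    (h1 : 0 < lam1) (h2 : 0 < lam2) (hs : 0 < sig2) :
    ∃ C : ℝ, 0 < C ∧ ∀ β : ℝ,
      C * Real.exp (-(lam2 * β ^ 2) / (2 * sig2) - lam1 * |β| / (2 * sig2)) =
        (1 / 2) * (if β < 0 then
            normalPDF (lam1 / (2 * lam2)) (sig2 / lam2) β /
              stdNormalCDF (-(lam1 / (2 * lam2)) / Real.sqrt (sig2 / lam2))
          else 0) +
        (1 / 2) * (if 0 ≤ β then
            normalPDF (-(lam1 / (2 * lam2))) (sig2 / lam2) β /
              (1 - stdNormalCDF ((lam1 / (2 * lam2)) / Real.sqrt (sig2 / lam2)))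
          else 0) := by
  set m : ℝ := lam1 / (2 * lam2) with hm
  set v : ℝ := sig2 / lam2 with hv
  have hv0 : 0 < v := div_pos hs h2
  have hD : stdNormalCDF (-m / Real.sqrt v) = 1 - stdNormalCDF (m / Real.sqrt v) := by
    rw [neg_div]; exact cdf_compl _
  set D : ℝ := stdNormalCDF (-m / Real.sqrt v) with hDdef
  have hDpos : 0 < D := cdf_pos _
  refine ⟨(Real.sqrt (2 * Real.pi * v))⁻¹ * Real.exp (-m ^ 2 / (2 * v)) / (2 * D),
    by positivity, fun β => ?_⟩
  rcases lt_or_ge β 0 with hβ | hβ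
  · rw [if_pos hβ, if_neg (not_le.mpr hβ), abs_of_neg hβ]
    rw [mul_zero, add_zero]
    unfold normalPDF
    rw [div_mul_eq_mul_div, mul_assoc, ← Real.exp_add]
    have harg : -m ^ 2 / (2 * v) + (-(lam2 * β ^ 2) / (2 * sig2) - lam1 * -β / (2 * sig2))
        = -(β - m) ^ 2 / (2 * v) := by
      rw [hm, hv]
      field_simp
      ring
    rw [harg]
    field_simp
  · rw [if_neg (not_lt.mpr hβ), if_pos hβ, abs_of_nonneg hβ]
    rw [mul_zero, zero_add, ← hD]
    unfold normalPDF
    rw [div_mul_eq_mul_div, mul_assoc, ← Real.exp_add]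
    have harg : -m ^ 2 / (2 * v) + (-(lam2 * β ^ 2) / (2 * sig2) - lam1 * β / (2 * sig2))
        = -(β - -m) ^ 2 / (2 * v) := by
      rw [hm, hv]
      field_simp
      ring
    rw [harg]
    field_simp
end
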